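/- arXiv:1608.01189 — 2 statements merged into one kernel-verified Lean document; each statement's English description precedes it below -/
import Mathlib

section
/- Let k ≥ 1 and let G be a finite simple graph on n vertices. Then ppt_k(G) = n − 1 if and only if G is isomorphic to K_1 or to K_2. -/
namespace PowerProp

open SimpleGraph

variable {V : Type*} {α β : Type*}

/-- The closed neighborhood `N[S]` of a set of vertices. -/
def closedNbhd (G : SimpleGraph V) (S : Set V) : Set V :=
  S ∪ ⋃ v ∈ S, G.neighborSet v

/-- One propagation step of the `k`-power domination process. -/
def propStep (k : ℕ) (G : SimpleGraph V) (S : Set V) : Set V :=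
  S ∪ {w | ∃ v ∈ S, w ∈ G.neighborSet v \ S ∧ (G.neighborSet v \ S).ncard ≤ k}

/-- `S^[t]`: the set observed after `t` steps (step 1 is the domination step). -/
def powerIter (k : ℕ) (G : SimpleGraph V) (S : Set V) : ℕ → Set V
  | 0 => S
  | 1 => closedNbhd G S
  | (t + 2) => propStep k G (powerIter k G S (t + 1))

/-- `S` is a `k`-power dominating set of `G`. -/
def IsPDS (k : ℕ) (G : SimpleGraph V) (S : Set V) : Prop :=
  ∃ l, powerIter k G S l = Set.univ

/-- The `k`-power domination number `γ_{P,k}(G)`. -/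
noncomputable def pdNum (k : ℕ) (G : SimpleGraph V) : ℕ :=
  sInf {n | ∃ S : Set V, S.ncard = n ∧ IsPDS k G S}

/-- `S` is a minimum `k`-power dominating set of `G`. -/
def IsMinPDS (k : ℕ) (G : SimpleGraph V) (S : Set V) : Prop :=
  IsPDS k G S ∧ S.ncard = pdNum k G

/-- `ppt_k(G,S)`, the `k`-power propagation time of `G` with `S`. -/
noncomputable def pptOf (k : ℕ) (G : SimpleGraph V) (S : Set V) : ℕ :=
  sInf {l | powerIter k G S l = Set.univ}

/-- `ppt_k(G)`, the (minimum) `k`-power propagation time of `G`. -/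
noncomputable def ppt (k : ℕ) (G : SimpleGraph V) : ℕ :=
  sInf {t | ∃ S : Set V, IsMinPDS k G S ∧ pptOf k G S = t}

set_option linter.unusedSectionVars false

-- ==== auxiliary lemmas ====

variable [Fintype V] (k : ℕ) (G : SimpleGraph V) (S T : Set V)

lemma powerIter_zero : powerIter k G S 0 = S := rfl
lemma powerIter_one : powerIter k G S 1 = closedNbhd G S := rfl
lemma powerIter_add_two (t : ℕ) :
    powerIter k G S (t + 2) = propStep k G (powerIter k G S (t + 1)) := rfl

lemma subset_closedNbhd : S ⊆ closedNbhd G S := Set.subset_union_left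

lemma subset_propStep : S ⊆ propStep k G S := Set.subset_union_left

lemma closedNbhd_mono (h : S ⊆ T) : closedNbhd G S ⊆ closedNbhd G T := by
  apply Set.union_subset_union h
  exact Set.biUnion_subset_biUnion_left h

lemma propStep_mono (h : S ⊆ T) : propStep k G S ⊆ propStep k G T := by
  rintro w (hw | ⟨v, hv, ⟨hwN, hwS⟩, hcard⟩)
  · exact Or.inl (h hw)
  by_cases hwT : w ∈ T
  · exact Or.inl hwT
  refine Or.inr ⟨v, h hv, ⟨hwN, hwT⟩, le_trans (Set.ncard_le_ncard ?_ (Set.toFinite _)) hcard⟩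
  exact Set.diff_subset_diff_right h

lemma powerIter_subset_succ (t : ℕ) : powerIter k G S t ⊆ powerIter k G S (t + 1) := by
  match t with
  | 0 => exact subset_closedNbhd G S
  | (n + 1) => exact subset_propStep k G _

lemma powerIter_mono_nat {s t : ℕ} (h : s ≤ t) : powerIter k G S s ⊆ powerIter k G S t := by
  induction t with
  | zero => rw [Nat.le_zero.mp h]
  | succ n ih =>
    rcases Nat.lt_or_eq_of_le h with h' | h'
    · exact (ih (Nat.lt_succ_iff.mp h')).trans (powerIter_subset_succ k G S n)
    · rw [h']

lemma propStep_of_closed (h : closedNbhd G S = S) : propStep k G S = S := by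
  apply subset_antisymm _ (subset_propStep k G S)
  rintro w (hw | ⟨v, hv, ⟨hwN, hwS⟩, -⟩)
  · exact hw
  · exact absurd (h ▸ (Or.inr (Set.mem_biUnion hv hwN) : w ∈ closedNbhd G S)) hwS

lemma powerIter_stall (t : ℕ) (h : powerIter k G S (t + 1) = powerIter k G S t) :
    ∀ s, t ≤ s → powerIter k G S s = powerIter k G S t := by
  have key : propStep k G (powerIter k G S t) = powerIter k G S t := by
    rcases t with _ | m
    · exact propStep_of_closed k G S h
    · exact h
  intro s hs
  induction s with
  | zero => rw [Nat.le_zero.mp hs]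
  | succ n ih =>
    rcases eq_or_lt_of_le hs with heq | hlt
    · rw [← heq]
    · have hn : t ≤ n := Nat.lt_succ_iff.mp hlt
      have hpn := ih hn
      rcases n with _ | m
      · rw [Nat.le_zero.mp hn] at h ⊢; exact h
      · calc powerIter k G S (m + 2) = propStep k G (powerIter k G S (m + 1)) := rfl
          _ = propStep k G (powerIter k G S t) := by rw [hpn]
          _ = powerIter k G S t := key

lemma eq_univ_of_stall (hS : IsPDS k G S) (t : ℕ)
    (h : powerIter k G S (t + 1) = powerIter k G S t) :
    powerIter k G S t = Set.univ := by
  obtain ⟨l, hl⟩ := hS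
  have h1 := powerIter_stall k G S t h (max l t) (le_max_right _ _)
  have h2 : powerIter k G S l ⊆ powerIter k G S (max l t) :=
    powerIter_mono_nat k G S (le_max_left _ _)
  rw [hl, h1] at h2
  exact Set.univ_subset_iff.mp h2

lemma powerIter_pptOf (hS : IsPDS k G S) : powerIter k G S (pptOf k G S) = Set.univ :=
  Nat.sInf_mem hS

lemma powerIter_ssubset (hS : IsPDS k G S) {t : ℕ} (ht : t < pptOf k G S) :
    powerIter k G S t ⊂ powerIter k G S (t + 1) := by
  refine (powerIter_subset_succ k G S t).ssubset_of_ne ?_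
  intro heq
  have h1 := eq_univ_of_stall k G S hS t heq.symm
  exact absurd (Nat.sInf_le (show t ∈ {l | powerIter k G S l = Set.univ} from h1))
    (Nat.not_le.mpr ht)

lemma ncard_powerIter_le (hS : IsPDS k G S) (a d : ℕ)
    (h : a + d ≤ pptOf k G S) :
    (powerIter k G S a).ncard + d ≤ (powerIter k G S (a + d)).ncard := by
  induction d with
  | zero => simp
  | succ n ih =>
    have h1 := ih (by omega)
    have h2 : (powerIter k G S (a + n)).ncard < (powerIter k G S (a + n + 1)).ncard :=
      Set.ncard_lt_ncard (powerIter_ssubset k G S hS (by omega)) (Set.toFinite _)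
    have h3 : a + (n + 1) = a + n + 1 := rfl
    rw [h3]
    omega

lemma ncard_add_pptOf_le (hS : IsPDS k G S) :
    S.ncard + pptOf k G S ≤ Fintype.card V := by
  have h1 := ncard_powerIter_le k G S hS 0 (pptOf k G S) (by omega)
  rw [zero_add, powerIter_pptOf k G S hS, Set.ncard_univ, Nat.card_eq_fintype_card] at h1
  exact h1

lemma ncard_closedNbhd_add_le (hS : IsPDS k G S) (hp : 1 ≤ pptOf k G S) :
    (closedNbhd G S).ncard + (pptOf k G S - 1) ≤ Fintype.card V := by
  have h1 := ncard_powerIter_le k G S hS 1 (pptOf k G S - 1) (by omega)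
  rw [show 1 + (pptOf k G S - 1) = pptOf k G S by omega,
    powerIter_pptOf k G S hS, Set.ncard_univ, Nat.card_eq_fintype_card] at h1
  exact h1


lemma isPDS_univ : IsPDS k G (Set.univ : Set V) := ⟨0, rfl⟩

lemma exists_isMinPDS : ∃ S : Set V, IsMinPDS k G S := by
  have hne : {n | ∃ S : Set V, S.ncard = n ∧ IsPDS k G S}.Nonempty :=
    ⟨_, Set.univ, rfl, isPDS_univ k G⟩
  obtain ⟨S, hS1, hS2⟩ := Nat.sInf_mem hne
  exact ⟨S, hS2, hS1⟩

lemma pdNum_le_ncard (hS : IsPDS k G S) : pdNum k G ≤ S.ncard :=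
  Nat.sInf_le ⟨S, rfl, hS⟩

lemma powerIter_empty (t : ℕ) : powerIter k G (∅ : Set V) t = ∅ := by
  match t with
  | 0 => rfl
  | 1 => simp [powerIter_one, closedNbhd]
  | (n + 2) =>
    rw [powerIter_add_two, powerIter_empty (n + 1)]
    simp [propStep]

lemma pdNum_pos [Nonempty V] : 1 ≤ pdNum k G := by
  by_contra h
  have h0 : pdNum k G = 0 := by omega
  have hne : {n | ∃ S : Set V, S.ncard = n ∧ IsPDS k G S}.Nonempty :=
    ⟨_, Set.univ, rfl, isPDS_univ k G⟩
  obtain ⟨S, hS1, hS2⟩ := Nat.sInf_mem hne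
  rw [show sInf {n | ∃ S : Set V, S.ncard = n ∧ IsPDS k G S} = pdNum k G from rfl, h0] at hS1
  have hSe : S = ∅ := (Set.ncard_eq_zero (Set.toFinite S)).mp hS1
  obtain ⟨l, hl⟩ := hS2
  rw [hSe, powerIter_empty] at hl
  exact Set.empty_ne_univ hl

lemma ppt_le_pptOf (hS : IsMinPDS k G S) : ppt k G ≤ pptOf k G S :=
  Nat.sInf_le ⟨S, hS, rfl⟩

lemma pptOf_univ : pptOf k G (Set.univ : Set V) = 0 :=
  Nat.le_zero.mp (Nat.sInf_le rfl)

lemma closedNbhd_singleton (v : V) :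
    closedNbhd G {v} = insert v (G.neighborSet v) := by
  rw [closedNbhd, Set.biUnion_singleton, Set.singleton_union]

-- if pptOf S = 0 for a PDS S then S = univ
lemma eq_univ_of_pptOf_eq_zero (hS : IsPDS k G S) (h : pptOf k G S = 0) :
    S = Set.univ := by
  have := powerIter_pptOf k G S hS
  rw [h] at this
  exact this

lemma ppt_eq_zero_of_no_edge (h : ∀ a b : V, ¬ G.Adj a b) : ppt k G = 0 := by
  have hclosed : ∀ T : Set V, closedNbhd G T = T := by
    intro T
    apply subset_antisymm _ (subset_closedNbhd G T)
    rintro w (hw | hw)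
    · exact hw
    · simp only [Set.mem_iUnion, mem_neighborSet] at hw
      obtain ⟨v, -, hadj⟩ := hw
      exact absurd hadj (h v w)
  have huniv : IsMinPDS k G (Set.univ : Set V) := by
    refine ⟨isPDS_univ k G, ?_⟩
    apply le_antisymm _ (pdNum_le_ncard k G _ (isPDS_univ k G))
    obtain ⟨S, hS⟩ := exists_isMinPDS k G
    have hSu : S = Set.univ := eq_univ_of_stall k G S hS.1 0 (hclosed S)
    rw [← hS.2, hSu]
  have h0 := ppt_le_pptOf k G _ huniv
  rw [pptOf_univ] at h0
  omega

lemma ppt_eq_zero_of_card_one (h : Fintype.card V = 1) : ppt k G = 0 := by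
  have : Nonempty V := Fintype.card_pos_iff.mp (by omega)
  have hmin : IsMinPDS k G (Set.univ : Set V) := by
    refine ⟨isPDS_univ k G, le_antisymm ?_ ?_⟩
    · rw [Set.ncard_univ, Nat.card_eq_fintype_card, h]; exact pdNum_pos k G
    · exact pdNum_le_ncard k G _ (isPDS_univ k G)
  have h0 := ppt_le_pptOf k G _ hmin
  rw [pptOf_univ] at h0
  omega

lemma ppt_eq_one_of_edge (h2 : Fintype.card V = 2) {a b : V} (hab : G.Adj a b) :
    ppt k G = 1 := by
  have hne : Nonempty V := Fintype.card_pos_iff.mp (by omega)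
  have hpair : ({a, b} : Set V) = Set.univ := by
    apply Set.eq_of_subset_of_ncard_le (Set.subset_univ _)
    rw [Set.ncard_univ, Nat.card_eq_fintype_card, h2, Set.ncard_pair hab.ne]
  have hcn : closedNbhd G {a} = Set.univ := by
    apply Set.eq_univ_of_univ_subset
    rw [← hpair, closedNbhd_singleton]
    rintro x (rfl | rfl)
    · exact Set.mem_insert _ _
    · exact Set.mem_insert_of_mem _ hab
  have hpds : IsPDS k G ({a} : Set V) := ⟨1, hcn⟩
  have hpd1 : pdNum k G = 1 := by
    have h1 := pdNum_le_ncard k G _ hpds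
    rw [Set.ncard_singleton] at h1
    have := pdNum_pos k G
    omega
  have hmin : IsMinPDS k G ({a} : Set V) := ⟨hpds, by rw [Set.ncard_singleton, hpd1]⟩
  have hpptOf : pptOf k G ({a} : Set V) = 1 := by
    apply le_antisymm (Nat.sInf_le hcn)
    rcases Nat.eq_zero_or_pos (pptOf k G ({a} : Set V)) with h0 | h0
    · exfalso
      have hu := eq_univ_of_pptOf_eq_zero k G _ hpds h0
      have hb : b ∈ ({a} : Set V) := hu ▸ Set.mem_univ b
      exact hab.ne (Set.mem_singleton_iff.mp hb).symm
    · exact h0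
  apply le_antisymm (by rw [← hpptOf]; exact ppt_le_pptOf k G _ hmin)
  rcases Nat.eq_zero_or_pos (ppt k G) with h0 | h0
  · exfalso
    have hmem := Nat.sInf_mem (⟨1, {a}, hmin, hpptOf⟩ :
      {t | ∃ S : Set V, IsMinPDS k G S ∧ pptOf k G S = t}.Nonempty)
    rw [show sInf {t | ∃ S : Set V, IsMinPDS k G S ∧ pptOf k G S = t} = ppt k G from rfl,
      h0] at hmem
    obtain ⟨S, hSmin, hS0⟩ := hmem
    have hSu := eq_univ_of_pptOf_eq_zero k G S hSmin.1 hS0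
    have := hSmin.2
    rw [hSu, Set.ncard_univ, Nat.card_eq_fintype_card, h2, hpd1] at this
    omega
  · exact h0


lemma ppt_add_two_le (h3 : 3 ≤ Fintype.card V) :
    ppt k G + 2 ≤ Fintype.card V := by
  classical
  have hne : Nonempty V := Fintype.card_pos_iff.mp (by omega)
  obtain ⟨S, hSpds, hScard⟩ := exists_isMinPDS k G
  by_cases h2 : 2 ≤ pdNum k G
  · have hb := ncard_add_pptOf_le k G S hSpds
    have hle := ppt_le_pptOf k G S ⟨hSpds, hScard⟩
    omega
  · have h1 : pdNum k G = 1 := by have := pdNum_pos k G; omega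
    have hS1 : S.ncard = 1 := hScard.trans h1
    obtain ⟨v, rfl⟩ := Set.ncard_eq_one.mp hS1
    have key : ∀ w : V, IsPDS k G {w} → 2 ≤ (G.neighborSet w).ncard →
        ppt k G + 2 ≤ Fintype.card V := by
      intro w hw hdeg
      have hmin : IsMinPDS k G {w} := ⟨hw, by rw [Set.ncard_singleton, h1]⟩
      have hle := ppt_le_pptOf k G {w} hmin
      rcases Nat.eq_zero_or_pos (pptOf k G ({w} : Set V)) with hp | hp
      · omega
      · have hb := ncard_closedNbhd_add_le k G {w} hw hp
        have hcn : (closedNbhd G {w}).ncard = (G.neighborSet w).ncard + 1 := by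
          rw [closedNbhd_singleton,
            Set.ncard_insert_of_notMem (by simp) (Set.toFinite _)]
        omega
    rcases Nat.lt_or_ge ((G.neighborSet v).ncard) 2 with hd | hd
    · rcases Nat.lt_or_ge ((G.neighborSet v).ncard) 1 with hd0 | hd1
      · -- degree 0 : contradiction
        exfalso
        have hN : G.neighborSet v = ∅ :=
          (Set.ncard_eq_zero (Set.toFinite _)).mp (by omega)
        have hc : closedNbhd G ({v} : Set V) = {v} := by
          rw [closedNbhd_singleton, hN]; simp
        have hu := eq_univ_of_stall k G {v} hSpds 0 hc
        have : ({v} : Set V).ncard = Fintype.card V := by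
          rw [show powerIter k G {v} 0 = ({v} : Set V) from rfl] at hu
          rw [hu, Set.ncard_univ, Nat.card_eq_fintype_card]
        rw [Set.ncard_singleton] at this
        omega
      · -- degree 1
        have hdeq : (G.neighborSet v).ncard = 1 := by omega
        obtain ⟨u, hu⟩ := Set.ncard_eq_one.mp hdeq
        have huv : G.Adj v u := by
          have : u ∈ G.neighborSet v := by rw [hu]; rfl
          exact this
        have hsub1 : powerIter k G ({v} : Set V) 1 ⊆ powerIter k G ({u} : Set V) 1 := by
          rw [powerIter_one, powerIter_one, closedNbhd_singleton, closedNbhd_singleton, hu]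
          rintro x (rfl | rfl)
          · exact Set.mem_insert_of_mem _ huv.symm
          · exact Set.mem_insert _ _
        have hsubt : ∀ t, 1 ≤ t →
            powerIter k G ({v} : Set V) t ⊆ powerIter k G ({u} : Set V) t := by
          intro t ht
          induction t with
          | zero => omega
          | succ n ih =>
            rcases n with _ | m
            · exact hsub1
            · rw [powerIter_add_two, powerIter_add_two]
              exact propStep_mono k G _ _ (ih (by omega))
        have hupds : IsPDS k G ({u} : Set V) := by
          obtain ⟨l, hl⟩ := hSpds
          refine ⟨l + 1, ?_⟩
          have hv1 : powerIter k G ({v} : Set V) (l + 1) = Set.univ :=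
            Set.univ_subset_iff.mp (hl ▸ powerIter_mono_nat k G _ (Nat.le_succ l))
          exact Set.univ_subset_iff.mp (hv1 ▸ hsubt (l + 1) (by omega))
        rcases Nat.lt_or_ge ((G.neighborSet u).ncard) 2 with hdu | hdu
        · -- deg u ≤ 1 ⇒ graph has only 2 reachable vertices : contradiction
          exfalso
          have hvinu : v ∈ G.neighborSet u := huv.symm
          have hNu : G.neighborSet u = {v} := by
            symm
            apply Set.eq_of_subset_of_ncard_le (Set.singleton_subset_iff.mpr hvinu)
            rw [Set.ncard_singleton]; omega
          have hA1 : powerIter k G ({v} : Set V) 1 = {v, u} := by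
            rw [powerIter_one, closedNbhd_singleton, hu]
          have hclosed : closedNbhd G ({v, u} : Set V) = {v, u} := by
            apply subset_antisymm _ (subset_closedNbhd G _)
            rintro x (hx | hx)
            · exact hx
            · simp only [Set.mem_iUnion] at hx
              obtain ⟨y, hy, hxy⟩ := hx
              rcases hy with rfl | rfl
              · rw [hu] at hxy
                exact Or.inr hxy
              · rw [hNu] at hxy
                exact Or.inl hxy
          have hstall : powerIter k G ({v} : Set V) 2 = powerIter k G ({v} : Set V) 1 := by
            rw [powerIter_add_two, hA1, propStep_of_closed k G _ hclosed]
          have huniv := eq_univ_of_stall k G {v} hSpds 1 hstall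
          rw [hA1] at huniv
          have hcard : (Set.univ : Set V).ncard ≤ 2 := by
            rw [← huniv]
            exact le_trans (Set.ncard_insert_le _ _) (by rw [Set.ncard_singleton])
          rw [Set.ncard_univ, Nat.card_eq_fintype_card] at hcard
          omega
        · exact key u hupds hdu
    · exact key v hSpds hd

end PowerProp

open SimpleGraph PowerProp in
/-- `ppt_k(G) = |G| - 1` iff `G` is `K_1` or `K_2`. -/
theorem ppt_eq_card_sub_one_iff {V : Type*} [Fintype V]
    (k : ℕ) (hk : 1 ≤ k) (G : SimpleGraph V) :
    (ppt k G : ℤ) = (Fintype.card V : ℤ) - 1 ↔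
      Nonempty (G ≃g completeGraph (Fin 1)) ∨ Nonempty (G ≃g completeGraph (Fin 2)) := by
  classical
  obtain h0 | h1 | h2 | h3 : Fintype.card V = 0 ∨ Fintype.card V = 1 ∨
      Fintype.card V = 2 ∨ 3 ≤ Fintype.card V := by omega
  · constructor
    · intro h
      rw [h0] at h
      omega
    · rintro (hf | hf) <;> obtain ⟨f⟩ := hf
      · have hc := Fintype.card_congr f.toEquiv
        rw [h0, Fintype.card_fin] at hc
        omega
      · have hc := Fintype.card_congr f.toEquiv
        rw [h0, Fintype.card_fin] at hc
        omega
  · constructor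
    · intro _
      left
      have e : V ≃ Fin 1 := Fintype.equivFinOfCardEq h1
      have hsub : Subsingleton V := Fintype.card_le_one_iff_subsingleton.mp (le_of_eq h1)
      refine ⟨⟨e, ?_⟩⟩
      intro a b
      rw [Subsingleton.elim a b]
      simp [completeGraph]
    · intro _
      rw [ppt_eq_zero_of_card_one k G h1, h1]
      norm_num
  · by_cases hedge : ∃ a b : V, G.Adj a b
    · obtain ⟨a, b, hab⟩ := hedge
      have htwo : ∀ z : V, z = a ∨ z = b := by
        intro z
        by_contra hz
        push_neg at hz
        have hcard : ({z, a, b} : Finset V).card = 3 := by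
          rw [Finset.card_insert_of_notMem (by simp [hz.1, hz.2]),
            Finset.card_insert_of_notMem (by simp [hab.ne]), Finset.card_singleton]
        have hle := Finset.card_le_univ ({z, a, b} : Finset V)
        rw [hcard, h2] at hle
        omega
      have hGtop : G = ⊤ := by
        ext x y
        simp only [SimpleGraph.top_adj]
        constructor
        · exact fun h => h.ne
        · intro hxy
          rcases htwo x with rfl | rfl <;> rcases htwo y with rfl | rfl
          · exact absurd rfl hxy
          · exact hab
          · exact hab.symm
          · exact absurd rfl hxy
      constructor
      · intro _
        right
        have e : V ≃ Fin 2 := Fintype.equivFinOfCardEq h2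
        refine ⟨⟨e, ?_⟩⟩
        intro x y
        rw [hGtop]
        simp [completeGraph, e.apply_eq_iff_eq]
      · intro _
        rw [ppt_eq_one_of_edge k G h2 hab, h2]
        norm_num
    · push_neg at hedge
      constructor
      · intro h
        exfalso
        rw [ppt_eq_zero_of_no_edge k G hedge, h2] at h
        omega
      · rintro (hf | hf) <;> obtain ⟨f⟩ := hf
        · have hc := Fintype.card_congr f.toEquiv
          rw [h2, Fintype.card_fin] at hc
          omega
        · exact absurd (f.symm.map_rel_iff.mpr
            (by simp [completeGraph] : (completeGraph (Fin 2)).Adj 0 1)) (hedge _ _)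
  · constructor
    · intro h
      exfalso
      have hb := ppt_add_two_le k G h3
      omega
    · rintro (hf | hf) <;> obtain ⟨f⟩ := hf
      · have hc := Fintype.card_congr f.toEquiv
        rw [Fintype.card_fin] at hc
        omega
      · have hc := Fintype.card_congr f.toEquiv
        rw [Fintype.card_fin] at hc
        omega
end

section
/- Let k ≥ 1 and let G be a finite simple graph on n vertices with ppt_k(G) = n − 2. Then G is isomorphic to one of: K_1 ⊔ K_1 (two isolated vertices), K_1 ⊔ K_2, P_3, P_4, C_3, or C_4. -/
section Infra
open SimpleGraph PowerProp
variable {V : Type*} {k : ℕ} {G : SimpleGraph V} {S T : Set V}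

lemma subset_closedNbhd : S ⊆ closedNbhd G S := Set.subset_union_left
lemma subset_propStep : S ⊆ propStep k G S := Set.subset_union_left

lemma closedNbhd_mono (h : S ⊆ T) : closedNbhd G S ⊆ closedNbhd G T := by
  unfold closedNbhd
  apply Set.union_subset_union h
  exact Set.biUnion_subset_biUnion_left h

lemma propStep_mono [Finite V] (h : S ⊆ T) : propStep k G S ⊆ propStep k G T := by
  intro w hw
  rcases hw with hw | ⟨v, hv, ⟨hwn, hwS⟩, hcard⟩
  · exact Or.inl (h hw)
  · by_cases hwT : w ∈ T
    · exact Or.inl hwT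
    · refine Or.inr ⟨v, h hv, ⟨hwn, hwT⟩, le_trans ?_ hcard⟩
      exact Set.ncard_le_ncard (Set.diff_subset_diff_right h) (Set.toFinite _)

lemma powerIter_two_eq (t : ℕ) :
    powerIter k G S (t + 2) = propStep k G (powerIter k G S (t + 1)) := rfl

lemma powerIter_succ_eq {t : ℕ} (ht : 1 ≤ t) :
    powerIter k G S (t + 1) = propStep k G (powerIter k G S t) :=
  match t, ht with
  | (_ + 1), _ => rfl

lemma powerIter_subset_succ (t : ℕ) : powerIter k G S t ⊆ powerIter k G S (t + 1) := by
  match t with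
  | 0 => exact subset_closedNbhd
  | (t + 1) => exact subset_propStep

lemma powerIter_mono_right {t t' : ℕ} (h : t ≤ t') :
    powerIter k G S t ⊆ powerIter k G S t' := by
  induction t' with
  | zero => simp_all
  | succ n ih =>
    rcases Nat.lt_or_ge t (n + 1) with h' | h'
    · exact (ih (Nat.lt_succ_iff.mp h')).trans (powerIter_subset_succ n)
    · have : t = n + 1 := le_antisymm h h'
      subst this; rfl

lemma powerIter_mono_left [Finite V] (h : S ⊆ T) :
    ∀ t, powerIter k G S t ⊆ powerIter k G T t
  | 0 => h
  | 1 => closedNbhd_mono h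
  | (t + 2) => propStep_mono (powerIter_mono_left h (t + 1))

lemma leapfrog [Finite V] {t t' : ℕ} (ht : 1 ≤ t) (ht' : 1 ≤ t')
    (h : powerIter k G T t' ⊆ powerIter k G S t) :
    ∀ s, powerIter k G T (t' + s) ⊆ powerIter k G S (t + s) := by
  intro s
  induction s with
  | zero => exact h
  | succ n ih =>
    rw [show t' + (n + 1) = (t' + n) + 1 by ring, show t + (n + 1) = (t + n) + 1 by ring,
      powerIter_succ_eq (le_trans ht' (Nat.le_add_right _ n)), powerIter_succ_eq (le_trans ht (Nat.le_add_right _ n))]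
    exact propStep_mono ih

lemma propStep_of_closedNbhd_eq (h : closedNbhd G S = S) : propStep k G S = S := by
  have hn : ∀ v ∈ S, G.neighborSet v ⊆ S := by
    intro v hv w hw
    rw [← h]
    exact Or.inr (Set.mem_biUnion hv hw)
  unfold propStep
  apply Set.union_eq_self_of_subset_right
  rintro w ⟨v, hv, ⟨hwn, hwS⟩, -⟩
  exact absurd (hn v hv hwn) hwS

lemma stall {t : ℕ} (h : powerIter k G S (t + 1) = powerIter k G S t) :
    ∀ s, powerIter k G S (t + s) = powerIter k G S t := by
  have step : ∀ u, powerIter k G S (u + 1) = powerIter k G S u →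
      powerIter k G S (u + 2) = powerIter k G S (u + 1) := by
    intro u hu
    match u with
    | 0 =>
      have h1 : closedNbhd G S = S := hu
      show propStep k G (powerIter k G S 1) = powerIter k G S 1
      show propStep k G (closedNbhd G S) = closedNbhd G S
      rw [h1]
      exact propStep_of_closedNbhd_eq h1
    | (u + 1) =>
      show propStep k G (powerIter k G S (u + 2)) = propStep k G (powerIter k G S (u + 1))
      rw [hu]
  have aux : ∀ s, powerIter k G S (t + s) = powerIter k G S t ∧
      powerIter k G S (t + s + 1) = powerIter k G S (t + s) := by
    intro s
    induction s with
    | zero => exact ⟨rfl, h⟩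
    | succ n ih =>
      refine ⟨by rw [show t + (n+1) = t + n + 1 by ring, ih.2, ih.1], ?_⟩
      have h2 := step (t + n) ih.2
      rw [show t + (n+1) + 1 = t + n + 2 by ring, show t + (n+1) = t + n + 1 by ring]
      exact h2
  exact fun s => (aux s).1

lemma powerIter_pptOf (hS : IsPDS k G S) : powerIter k G S (pptOf k G S) = Set.univ :=
  Nat.sInf_mem hS

lemma pptOf_le {t : ℕ} (h : powerIter k G S t = Set.univ) : pptOf k G S ≤ t := Nat.sInf_le h

lemma ne_univ_of_lt_pptOf {t : ℕ} (h : t < pptOf k G S) : powerIter k G S t ≠ Set.univ :=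
  Nat.notMem_of_lt_sInf h

lemma ssubset_of_lt_pptOf (hS : IsPDS k G S) {t : ℕ} (h : t < pptOf k G S) :
    powerIter k G S t ⊂ powerIter k G S (t + 1) := by
  refine (powerIter_subset_succ t).ssubset_of_ne fun heq => ?_
  have hstall := stall heq.symm (pptOf k G S - t)
  rw [show t + (pptOf k G S - t) = pptOf k G S by omega, powerIter_pptOf hS] at hstall
  exact ne_univ_of_lt_pptOf h hstall.symm

lemma chain_ncard [Finite V] (hS : IsPDS k G S) {t s : ℕ} (h : t + s ≤ pptOf k G S) :
    (powerIter k G S t).ncard + s ≤ (powerIter k G S (t + s)).ncard := by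
  induction s with
  | zero => simp
  | succ n ih =>
    have h1 : t + n < pptOf k G S := by omega
    have hss := ssubset_of_lt_pptOf hS h1
    have hlt := Set.ncard_lt_ncard hss (Set.toFinite _)
    have := ih (by omega)
    have heq : t + (n + 1) = (t + n) + 1 := by ring
    rw [heq]
    omega

lemma isPDS_univ : IsPDS k G (Set.univ : Set V) := ⟨0, rfl⟩

lemma exists_minPDS : ∃ S : Set V, IsMinPDS k G S := by
  have hne : pdNum k G ∈ {n | ∃ S : Set V, S.ncard = n ∧ IsPDS k G S} :=
    Nat.sInf_mem ⟨_, Set.univ, rfl, isPDS_univ⟩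
  obtain ⟨S, hc, hp⟩ := hne
  exact ⟨S, hp, hc.symm ▸ rfl⟩

lemma pdNum_le (hS : IsPDS k G S) : pdNum k G ≤ S.ncard := Nat.sInf_le ⟨S, rfl, hS⟩

lemma exists_ppt : ∃ S : Set V, IsMinPDS k G S ∧ pptOf k G S = ppt k G := by
  obtain ⟨S, hS⟩ := exists_minPDS (k := k) (G := G)
  exact Nat.sInf_mem (s := {t | ∃ S : Set V, IsMinPDS k G S ∧ pptOf k G S = t}) ⟨pptOf k G S, S, hS, rfl⟩

lemma ppt_le (hS : IsMinPDS k G S) : ppt k G ≤ pptOf k G S := Nat.sInf_le ⟨S, hS, rfl⟩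

lemma powerIter_empty : ∀ t, powerIter k G (∅ : Set V) t = ∅
  | 0 => rfl
  | 1 => by
    show closedNbhd G ∅ = ∅
    simp [closedNbhd]
  | (t + 2) => by
    rw [powerIter_two_eq, powerIter_empty (t + 1)]
    simp [propStep]

lemma not_isPDS_empty [Nonempty V] : ¬ IsPDS k G (∅ : Set V) := by
  rintro ⟨l, hl⟩
  rw [powerIter_empty] at hl
  exact (Set.empty_ne_univ hl)

lemma insert_of_ncard_succ {A B : Set V} (hAB : A ⊆ B) (h : B.ncard = A.ncard + 1)
    (hB : B.Finite) : ∃ w ∉ A, B = insert w A := by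
  have hss : A ⊂ B := hAB.ssubset_of_ne (by rintro rfl; omega)
  obtain ⟨w, hwB, hwA⟩ := Set.exists_of_ssubset hss
  refine ⟨w, hwA, ?_⟩
  have hsub : insert w A ⊆ B := Set.insert_subset hwB hAB
  have hcard : B.ncard ≤ (insert w A).ncard := by
    rw [Set.ncard_insert_of_notMem hwA (hB.subset hAB), h]
  exact (Set.eq_of_subset_of_ncard_le hsub hcard hB).symm

lemma eq_univ_of_ncard [Fintype V] (h : S.ncard = Fintype.card V) : S = Set.univ :=
  Set.eq_of_subset_of_ncard_le (Set.subset_univ S)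
    (by rw [Set.ncard_univ, Nat.card_eq_fintype_card, h]) (Set.finite_univ)

lemma mem_closedNbhd {w : V} : w ∈ closedNbhd G S ↔ w ∈ S ∨ ∃ v ∈ S, G.Adj v w := by
  simp only [closedNbhd, Set.mem_union, Set.mem_iUnion, mem_neighborSet, exists_prop]

lemma closedNbhd_singleton {a : V} : closedNbhd G {a} = insert a (G.neighborSet a) := by
  simp only [closedNbhd, Set.biUnion_singleton, Set.insert_eq]

lemma closedNbhd_pair {a b : V} :
    closedNbhd G {a, b} = {a, b} ∪ G.neighborSet a ∪ G.neighborSet b := by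
  simp [closedNbhd, Set.union_assoc]

lemma mem_propStep {w : V} : w ∈ propStep k G S ↔
    w ∈ S ∨ ∃ v ∈ S, w ∈ G.neighborSet v \ S ∧ (G.neighborSet v \ S).ncard ≤ k :=
  Iff.rfl

lemma propStep_subset_closedNbhd : propStep k G S ⊆ closedNbhd G S := by
  rintro w (hw | ⟨v, hv, ⟨hwn, -⟩, -⟩)
  · exact Or.inl hw
  · exact Or.inr (Set.mem_biUnion hv hwn)

lemma forced_subset_propStep {v : V} (hv : v ∈ S)
    (hc : (G.neighborSet v \ S).ncard ≤ k) : G.neighborSet v \ S ⊆ propStep k G S :=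
  fun w hw => Or.inr ⟨v, hv, hw, hc⟩

lemma iso_of_bij {W : Type*} {H : SimpleGraph W} (f : W → V)
    (hb : Function.Bijective f)
    (hadj : ∀ i j, G.Adj (f i) (f j) ↔ H.Adj i j) : Nonempty (G ≃g H) :=
  ⟨(RelIso.mk (Equiv.ofBijective f hb) (fun {i j} => hadj i j)).symm⟩

lemma iso_K1K1 (a b : V) (hab : a ≠ b) (hcov : ∀ v : V, v = a ∨ v = b)
    (hE : ∀ u v : V, ¬ G.Adj u v) :
    Nonempty (G ≃g completeGraph (Fin 1) ⊕g completeGraph (Fin 1)) := by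
  refine iso_of_bij (Sum.elim (fun _ => a) (fun _ => b)) ⟨?_, ?_⟩ ?_
  · rintro (i | i) (j | j) h
    · rw [Subsingleton.elim i j]
    · exact absurd h hab
    · exact absurd h.symm hab
    · rw [Subsingleton.elim i j]
  · intro v
    rcases hcov v with rfl | rfl
    · exact ⟨Sum.inl 0, rfl⟩
    · exact ⟨Sum.inr 0, rfl⟩
  · rintro (i | i) (j | j) <;> simp [hE, completeGraph] <;>
      exact Subsingleton.elim i j

lemma iso_K1K2 (a b c : V) (hab : a ≠ b) (hac : a ≠ c) (hbc : b ≠ c)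
    (hcov : ∀ v : V, v = a ∨ v = b ∨ v = c)
    (hAdj : ∀ u v : V, G.Adj u v ↔ (u = a ∧ v = c) ∨ (u = c ∧ v = a)) :
    Nonempty (G ≃g completeGraph (Fin 1) ⊕g completeGraph (Fin 2)) := by
  refine iso_of_bij (Sum.elim (fun _ => b) ![a, c]) ⟨?_, ?_⟩ ?_
  · rintro (i | i) (j | j) h
    · rw [Subsingleton.elim i j]
    · fin_cases j <;> simp_all
    · fin_cases i <;> simp_all
    · fin_cases i <;> fin_cases j <;> simp_all
  · intro v
    rcases hcov v with rfl | rfl | rfl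
    · exact ⟨Sum.inr 0, rfl⟩
    · exact ⟨Sum.inl 0, rfl⟩
    · exact ⟨Sum.inr 1, rfl⟩
  · rintro (i | i) (j | j) <;>
      first
        | (fin_cases i <;> fin_cases j <;>
            simp [hAdj, completeGraph, hab, hac, hbc, hab.symm, hac.symm, hbc.symm] <;>
            omega)
        | (fin_cases i <;>
            simp [hAdj, completeGraph, hab, hac, hbc, hab.symm, hac.symm, hbc.symm])
        | (fin_cases j <;>
            simp [hAdj, completeGraph, hab, hac, hbc, hab.symm, hac.symm, hbc.symm])
        | simp [hAdj, completeGraph, hab, hac, hbc, hab.symm, hac.symm, hbc.symm]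

lemma iso_P3 (a x y : V) (hax : a ≠ x) (hay : a ≠ y) (hxy : x ≠ y)
    (hcov : ∀ v : V, v = a ∨ v = x ∨ v = y)
    (hAdj : ∀ u v : V, G.Adj u v ↔
      (u = a ∧ v = x) ∨ (u = x ∧ v = a) ∨ (u = a ∧ v = y) ∨ (u = y ∧ v = a)) :
    Nonempty (G ≃g pathGraph 3) := by
  refine iso_of_bij ![x, a, y] ⟨?_, ?_⟩ ?_
  · intro i j h
    fin_cases i <;> fin_cases j <;> simp_all <;> simp_all [eq_comm]
  · intro v
    rcases hcov v with rfl | rfl | rfl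
    · exact ⟨1, rfl⟩
    · exact ⟨0, rfl⟩
    · exact ⟨2, rfl⟩
  · intro i j
    fin_cases i <;> fin_cases j <;>
      simp [hAdj, pathGraph_adj, hax, hay, hxy, hax.symm, hay.symm, hxy.symm]

lemma iso_C3 (a x y : V) (hax : a ≠ x) (hay : a ≠ y) (hxy : x ≠ y)
    (hcov : ∀ v : V, v = a ∨ v = x ∨ v = y)
    (hAdj : ∀ u v : V, G.Adj u v ↔ u ≠ v) :
    Nonempty (G ≃g cycleGraph 3) := by
  rw [cycleGraph_three_eq_top]
  refine iso_of_bij ![a, x, y] ⟨?_, ?_⟩ ?_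
  · intro i j h
    fin_cases i <;> fin_cases j <;> simp_all <;> simp_all [eq_comm]
  · intro v
    rcases hcov v with rfl | rfl | rfl
    · exact ⟨0, rfl⟩
    · exact ⟨1, rfl⟩
    · exact ⟨2, rfl⟩
  · intro i j
    fin_cases i <;> fin_cases j <;>
      simp [hAdj, hax, hay, hxy, hax.symm, hay.symm, hxy.symm, SimpleGraph.top_adj] <;>
      decide

lemma iso_P4 (y a x w : V) (hya : y ≠ a) (hyx : y ≠ x) (hyw : y ≠ w)
    (hax : a ≠ x) (haw : a ≠ w) (hxw : x ≠ w)
    (hcov : ∀ v : V, v = y ∨ v = a ∨ v = x ∨ v = w)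
    (hAdj : ∀ u v : V, G.Adj u v ↔
      (u = y ∧ v = a) ∨ (u = a ∧ v = y) ∨ (u = a ∧ v = x) ∨ (u = x ∧ v = a) ∨
      (u = x ∧ v = w) ∨ (u = w ∧ v = x)) :
    Nonempty (G ≃g pathGraph 4) := by
  refine iso_of_bij ![y, a, x, w] ⟨?_, ?_⟩ ?_
  · intro i j h
    fin_cases i <;> fin_cases j <;> simp_all <;> simp_all [eq_comm]
  · intro v
    rcases hcov v with rfl | rfl | rfl | rfl
    · exact ⟨0, rfl⟩
    · exact ⟨1, rfl⟩
    · exact ⟨2, rfl⟩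
    · exact ⟨3, rfl⟩
  · intro i j
    fin_cases i <;> fin_cases j <;>
      simp [hAdj, pathGraph_adj, hya, hyx, hyw, hax, haw, hxw,
        hya.symm, hyx.symm, hyw.symm, hax.symm, haw.symm, hxw.symm] <;> decide

lemma iso_C4 (a x w y : V) (hax : a ≠ x) (haw : a ≠ w) (hay : a ≠ y)
    (hxw : x ≠ w) (hxy : x ≠ y) (hwy : w ≠ y)
    (hcov : ∀ v : V, v = a ∨ v = x ∨ v = w ∨ v = y)
    (hAdj : ∀ u v : V, G.Adj u v ↔
      (u = a ∧ v = x) ∨ (u = x ∧ v = a) ∨ (u = x ∧ v = w) ∨ (u = w ∧ v = x) ∨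
      (u = w ∧ v = y) ∨ (u = y ∧ v = w) ∨ (u = y ∧ v = a) ∨ (u = a ∧ v = y)) :
    Nonempty (G ≃g cycleGraph 4) := by
  refine iso_of_bij ![a, x, w, y] ⟨?_, ?_⟩ ?_
  · intro i j h
    fin_cases i <;> fin_cases j <;> simp_all <;> simp_all [eq_comm]
  · intro v
    rcases hcov v with rfl | rfl | rfl | rfl
    · exact ⟨0, rfl⟩
    · exact ⟨1, rfl⟩
    · exact ⟨2, rfl⟩
    · exact ⟨3, rfl⟩
  · intro i j
    fin_cases i <;> fin_cases j <;>
      simp [hAdj, cycleGraph_adj, hax, haw, hay, hxw, hxy, hwy,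
        hax.symm, haw.symm, hay.symm, hxw.symm, hxy.symm, hwy.symm] <;>
      decide

variable [Fintype V]

lemma finisher (hS : IsMinPDS k G S) {T : Set V} (hT : T.ncard = pdNum k G)
    {t t' : ℕ} (ht : 1 ≤ t) (htt : t < t') (ht'l : t' ≤ pptOf k G S)
    (hppt : ppt k G = pptOf k G S)
    (hsub : powerIter k G S t' ⊆ powerIter k G T t) : False := by
  have ht'1 : 1 ≤ t' := le_trans ht htt.le
  have h1 := leapfrog (S := T) (T := S) (G := G) (k := k) ht ht'1 hsub (pptOf k G S - t')
  rw [show t' + (pptOf k G S - t') = pptOf k G S by omega, powerIter_pptOf hS.1] at h1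
  have h2 : powerIter k G T (t + (pptOf k G S - t')) = Set.univ :=
    Set.eq_univ_of_univ_subset h1
  have hTmin : IsMinPDS k G T := ⟨⟨_, h2⟩, hT⟩
  have h3 : ppt k G ≤ t + (pptOf k G S - t') := le_trans (ppt_le hTmin) (pptOf_le h2)
  omega

lemma finisher_card {T : Set V} (hT : IsPDS k G T) (h : T.ncard < pdNum k G) : False := by
  have := pdNum_le hT
  omega

lemma gamma_two_aux {a b c : V} (hk : 1 ≤ k)
    (hS : IsMinPDS k G S) (hSab : S = {a, b}) (hab : a ≠ b)
    (hppt : ppt k G = pptOf k G S)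
    (hl : pptOf k G S = Fintype.card V - 2) (hn : 3 ≤ Fintype.card V)
    (hO1 : powerIter k G S 1 = insert c S) (hcS : c ∉ S)
    (hNa : G.neighborSet a ⊆ {b, c}) (hNb : G.neighborSet b ⊆ {a, c})
    (hca : c ∈ G.neighborSet a) :
    Nonempty (G ≃g completeGraph (Fin 1) ⊕g completeGraph (Fin 2)) := by
  have hl1 : 1 ≤ pptOf k G S := by omega
  have hac : a ≠ c := fun h => hcS (h ▸ (hSab ▸ Set.mem_insert a {b}))
  have hbc : b ≠ c := fun h => hcS (h ▸ (hSab ▸ Set.mem_insert_of_mem a rfl))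
  have hpd : pdNum k G = 2 := by rw [← hS.2, hSab, Set.ncard_pair hab]
  have hAac : G.Adj a c := hca
  -- b is isolated
  have hNbE : G.neighborSet b = ∅ := by
    by_contra hne
    obtain ⟨u, hu⟩ := Set.nonempty_iff_ne_empty.mpr hne
    have hbmem : b ∈ G.neighborSet a ∨ b ∈ G.neighborSet c := by
      rcases hNb hu with h' | h'
      · left; exact ((h' ▸ hu : G.Adj b a).symm : G.Adj a b)
      · right; exact ((h' ▸ hu : G.Adj b c).symm : G.Adj c b)
    have hT2eq : powerIter k G ({c} : Set V) 2 = propStep k G (powerIter k G {c} 1) :=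
      powerIter_two_eq 0
    have hT1 : powerIter k G ({c} : Set V) 1 = insert c (G.neighborSet c) :=
      closedNbhd_singleton
    have haT1 : a ∈ powerIter k G ({c} : Set V) 1 := by
      rw [hT1]; exact Set.mem_insert_of_mem _ hAac.symm
    have hcm : c ∈ powerIter k G ({c} : Set V) 2 :=
      powerIter_subset_succ 1 (by rw [hT1]; exact Set.mem_insert _ _)
    have ham : a ∈ powerIter k G ({c} : Set V) 2 := powerIter_subset_succ 1 haT1
    have hbm : b ∈ powerIter k G ({c} : Set V) 2 := by
      rcases hbmem with hb' | hb'
      · by_cases hbT1 : b ∈ powerIter k G ({c} : Set V) 1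
        · exact powerIter_subset_succ 1 hbT1
        · rw [hT2eq]
          refine forced_subset_propStep haT1 ?_ ⟨hb', hbT1⟩
          have hsub1 : G.neighborSet a \ powerIter k G ({c} : Set V) 1 ⊆ {b} := by
            rintro u ⟨hu1, hu2⟩
            rcases hNa hu1 with h' | h'
            · exact h'
            · exact absurd (by rw [hT1, h']; exact Set.mem_insert _ _) hu2
          calc (G.neighborSet a \ powerIter k G ({c} : Set V) 1).ncard
              ≤ ({b} : Set V).ncard := Set.ncard_le_ncard hsub1 (Set.toFinite _)
            _ = 1 := Set.ncard_singleton b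
            _ ≤ k := hk
      · exact powerIter_subset_succ 1 (by rw [hT1]; exact Set.mem_insert_of_mem _ hb')
    have hsub : powerIter k G S 1 ⊆ powerIter k G ({c} : Set V) 2 := by
      rw [hO1, hSab]
      intro v hv
      rcases hv with h' | h' | h' <;> rw [h'] <;> assumption
    have hfull := leapfrog (S := ({c} : Set V)) (T := S) (G := G) (k := k)
      (t := 2) (t' := 1) (by norm_num) (by norm_num) hsub (pptOf k G S - 1)
    rw [show 1 + (pptOf k G S - 1) = pptOf k G S by omega, powerIter_pptOf hS.1] at hfull
    refine finisher_card ⟨2 + (pptOf k G S - 1), Set.eq_univ_of_univ_subset hfull⟩ ?_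
    rw [Set.ncard_singleton, hpd]; omega
  have hba : b ∉ G.neighborSet a := by
    intro h'
    have : a ∈ G.neighborSet b := (h' : G.Adj a b).symm
    rw [hNbE] at this
    exact this
  have hNac : G.neighborSet a = {c} := by
    apply subset_antisymm
    · intro u hu
      rcases hNa hu with rfl | rfl
      · exact absurd hu hba
      · rfl
    · intro u hu; rw [hu]; exact hca
  rcases Nat.lt_or_ge (Fintype.card V) 4 with hn4 | hn4
  · -- n = 3 : K1 ⊔ K2
    have hl' : pptOf k G S = 1 := by omega
    have hO1univ : powerIter k G S 1 = Set.univ := by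
      rw [← hl']; exact powerIter_pptOf hS.1
    have hcov : ∀ v : V, v = a ∨ v = b ∨ v = c := by
      intro v
      have hv : v ∈ insert c S := by rw [← hO1, hO1univ]; trivial
      rw [hSab] at hv
      rcases hv with h' | h' | h' <;> rw [h'] <;> tauto
    have hNc : G.neighborSet c = {a} := by
      apply subset_antisymm
      · intro u hu
        rcases hcov u with h' | h' | h'
        · exact h'
        · exfalso
          have hb : c ∈ G.neighborSet b := ((h' ▸ hu : G.Adj c b).symm : G.Adj b c)
          rw [hNbE] at hb
          exact hb
        · exact absurd (h' ▸ hu : G.Adj c c) (G.irrefl)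
      · intro u hu; rw [hu]; exact hAac.symm
    have hAdj : ∀ u v : V, G.Adj u v ↔ (u = a ∧ v = c) ∨ (u = c ∧ v = a) := by
      intro u v
      constructor
      · intro hadj
        rcases hcov u with h' | h' | h' <;> rw [h'] at hadj ⊢
        · have : v ∈ G.neighborSet a := hadj
          rw [hNac] at this
          exact Or.inl ⟨rfl, this⟩
        · have : v ∈ G.neighborSet b := hadj
          rw [hNbE] at this
          exact absurd this (Set.notMem_empty v)
        · have : v ∈ G.neighborSet c := hadj
          rw [hNc] at this
          exact Or.inr ⟨rfl, this⟩
      · rintro (⟨rfl, rfl⟩ | ⟨rfl, rfl⟩)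
        · exact hAac
        · exact hAac.symm
    exact iso_K1K2 a b c hab hac hbc hcov hAdj
  · -- n ≥ 4 : contradiction
    exfalso
    have hl2 : 2 ≤ pptOf k G S := by omega
    have hcardl : (powerIter k G S (pptOf k G S)).ncard = Fintype.card V := by
      rw [powerIter_pptOf hS.1, Set.ncard_univ, Nat.card_eq_fintype_card]
    have hS2 : S.ncard = 2 := by rw [hSab, Set.ncard_pair hab]
    have hO1card : (powerIter k G S 1).ncard = 3 := by
      rw [hO1, Set.ncard_insert_of_notMem hcS (Set.toFinite _), hS2]
    have hup := chain_ncard hS.1 (t := 2) (s := pptOf k G S - 2) (by omega)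
    rw [show 2 + (pptOf k G S - 2) = pptOf k G S by omega, hcardl] at hup
    have hlow : S.ncard + 2 ≤ (powerIter k G S 2).ncard :=
      chain_ncard hS.1 (t := 0) (s := 2) (by omega)
    have hO2card : (powerIter k G S 2).ncard = 4 := by omega
    obtain ⟨d, hdO1, hO2⟩ := insert_of_ncard_succ (A := powerIter k G S 1)
      (B := powerIter k G S 2) (powerIter_subset_succ 1) (by omega) (Set.toFinite _)
    have hdO2 : d ∈ powerIter k G S 2 := by rw [hO2]; exact Set.mem_insert _ _
    have hforced : ∃ v ∈ powerIter k G S 1,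
        d ∈ G.neighborSet v \ powerIter k G S 1 ∧
        (G.neighborSet v \ powerIter k G S 1).ncard ≤ k := by
      have := (mem_propStep (k := k) (G := G)).mp (by
        rw [← powerIter_two_eq 0] ; exact hdO2)
      tauto
    obtain ⟨v, hvO1, ⟨hdNv, -⟩, -⟩ := hforced
    have hdc : d ∈ G.neighborSet c := by
      rw [hO1, hSab] at hvO1
      rcases hvO1 with h' | h' | h' <;> rw [h'] at hdNv
      · exact hdNv
      · rw [hNac] at hdNv
        exact absurd (hdNv ▸ (hO1 ▸ Set.mem_insert c S : c ∈ powerIter k G S 1)) hdO1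
      · rw [hNbE] at hdNv
        exact absurd hdNv (Set.notMem_empty d)
    have hT1 : powerIter k G ({b, c} : Set V) 1 =
        ({b, c} : Set V) ∪ G.neighborSet b ∪ G.neighborSet c := closedNbhd_pair
    have hsub : powerIter k G S 2 ⊆ powerIter k G ({b, c} : Set V) 1 := by
      rw [hO2, hO1, hSab, hT1]
      intro v hv
      rcases hv with h' | h' | h' | h' <;> rw [h']
      · exact Or.inr hdc
      · exact Or.inl (Or.inl (Set.mem_insert_of_mem _ rfl))
      · exact Or.inr hAac.symm
      · exact Or.inl (Or.inl (Set.mem_insert _ _))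
    exact finisher hS (by rw [Set.ncard_pair hbc, hpd]) (le_refl 1) (by omega)
      hl2 hppt hsub

lemma case_gamma_two (hk : 1 ≤ k) (hS : IsMinPDS k G S) (hS2 : S.ncard = 2)
    (hppt : ppt k G = pptOf k G S) (hl : pptOf k G S = Fintype.card V - 2)
    (hn : 2 ≤ Fintype.card V) :
    Nonempty (G ≃g completeGraph (Fin 1) ⊕g completeGraph (Fin 1)) ∨
    Nonempty (G ≃g completeGraph (Fin 1) ⊕g completeGraph (Fin 2)) := by
  have hpd : pdNum k G = 2 := by rw [← hS.2, hS2]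
  rcases Nat.lt_or_ge (Fintype.card V) 3 with hn3 | hn3
  · -- n = 2 : two isolated vertices
    left
    have hn2 : Fintype.card V = 2 := by omega
    have hl0 : pptOf k G S = 0 := by omega
    have hSuniv : S = Set.univ := by
      have := powerIter_pptOf hS.1
      rwa [hl0] at this
    obtain ⟨a, b, hab, hab2⟩ := Set.ncard_eq_two.mp hS2
    have hcov : ∀ v : V, v = a ∨ v = b := by
      intro v
      have : v ∈ S := hSuniv ▸ trivial
      rw [hab2] at this
      exact this
    have hE : ∀ u v : V, ¬ G.Adj u v := by
      intro u v hadj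
      have huv : u ≠ v := hadj.ne
      have hcov2 : ∀ w : V, w = u ∨ w = v := by
        intro w
        rcases hcov u with h1 | h1 <;> rcases hcov v with h2 | h2 <;>
          rcases hcov w with h3 | h3 <;> subst h1 <;> subst h3 <;> tauto
      have huniv : powerIter k G ({u} : Set V) 1 = Set.univ := by
        show closedNbhd G {u} = Set.univ
        rw [closedNbhd_singleton]
        apply Set.eq_univ_of_forall
        intro w
        rcases hcov2 w with rfl | rfl
        · exact Set.mem_insert _ _
        · exact Set.mem_insert_of_mem _ hadj
      exact finisher_card ⟨1, huniv⟩ (by rw [Set.ncard_singleton, hpd]; omega)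
    exact iso_K1K1 a b hab hcov hE
  · -- n ≥ 3
    right
    have hl1 : 1 ≤ pptOf k G S := by omega
    have hcardl : (powerIter k G S (pptOf k G S)).ncard = Fintype.card V := by
      rw [powerIter_pptOf hS.1, Set.ncard_univ, Nat.card_eq_fintype_card]
    have hup := chain_ncard hS.1 (t := 1) (s := pptOf k G S - 1) (by omega)
    rw [show 1 + (pptOf k G S - 1) = pptOf k G S by omega, hcardl] at hup
    have hlow : S.ncard + 1 ≤ (powerIter k G S 1).ncard :=
      chain_ncard hS.1 (t := 0) (s := 1) (by omega)
    have hO1card : (powerIter k G S 1).ncard = 3 := by omega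
    obtain ⟨c, hcS, hO1⟩ := insert_of_ncard_succ (A := S) (B := powerIter k G S 1)
      subset_closedNbhd (by omega) (Set.toFinite _)
    obtain ⟨a, b, hab, hab2⟩ := Set.ncard_eq_two.mp hS2
    have hNsub : ∀ u : V, u ∈ S → G.neighborSet u ⊆ insert c S := by
      intro u hu w hw
      rw [← hO1]
      exact Or.inr (Set.mem_biUnion hu hw)
    have hNa : G.neighborSet a ⊆ {b, c} := by
      intro w hw
      have := hNsub a (hab2 ▸ Set.mem_insert _ _) hw
      rcases this with h' | h'
      · exact Or.inr h'
      · rw [hab2] at h'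
        rcases h' with h' | h'
        · exact absurd h'.symm (hw : G.Adj a w).ne
        · exact Or.inl h'
    have hNb : G.neighborSet b ⊆ {a, c} := by
      intro w hw
      have := hNsub b (hab2 ▸ Set.mem_insert_of_mem _ rfl) hw
      rcases this with h' | h'
      · exact Or.inr h'
      · rw [hab2] at h'
        rcases h' with h' | h'
        · exact Or.inl h'
        · exact absurd h'.symm (hw : G.Adj b w).ne
    have hcmem : c ∈ G.neighborSet a ∨ c ∈ G.neighborSet b := by
      have hc1 : c ∈ closedNbhd G S := show c ∈ powerIter k G S 1 from hO1 ▸ Set.mem_insert _ _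
      have := mem_closedNbhd.mp hc1
      rcases this with h' | ⟨v, hv, hadj⟩
      · exact absurd h' hcS
      · rw [hab2] at hv
        rcases hv with rfl | rfl
        · exact Or.inl hadj
        · exact Or.inr hadj
    rcases hcmem with hca | hcb
    · exact gamma_two_aux hk hS hab2 hab hppt hl hn3 hO1 hcS hNa hNb hca
    · refine gamma_two_aux hk hS (a := b) (b := a) (c := c) ?_ hab.symm hppt hl hn3
        hO1 hcS hNb hNa hcb
      rw [hab2, Set.pair_comm]

set_option maxHeartbeats 2000000 in
lemma gamma_one_aux {a x y w : V} (hk : 1 ≤ k)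
    (hS : IsMinPDS k G S) (hSa : S = {a}) (hxy : x ≠ y)
    (hppt : ppt k G = pptOf k G S) (hl : pptOf k G S = Fintype.card V - 2)
    (hn4 : 4 ≤ Fintype.card V)
    (hNa : G.neighborSet a = {x, y})
    (hO1 : powerIter k G S 1 = insert a {x, y})
    (hwO1 : w ∉ powerIter k G S 1)
    (hO2 : powerIter k G S 2 = insert w (powerIter k G S 1))
    (hNx : G.neighborSet x \ powerIter k G S 1 = {w}) :
    Nonempty (G ≃g pathGraph 4) ∨ Nonempty (G ≃g cycleGraph 4) := by
  have hpd : pdNum k G = 1 := by rw [← hS.2, hSa, Set.ncard_singleton]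
  have hl2 : 2 ≤ pptOf k G S := by omega
  have hAax : G.Adj a x := by
    have : x ∈ G.neighborSet a := by rw [hNa]; exact Set.mem_insert _ _
    exact this
  have hAay : G.Adj a y := by
    have : y ∈ G.neighborSet a := by rw [hNa]; exact Set.mem_insert_of_mem _ rfl
    exact this
  have hax : a ≠ x := hAax.ne
  have hay : a ≠ y := hAay.ne
  have hw3 : w ≠ a ∧ w ≠ x ∧ w ≠ y := by
    rw [hO1] at hwO1
    simp only [Set.mem_insert_iff, Set.mem_singleton_iff, not_or] at hwO1
    exact hwO1
  have hwNx : w ∈ G.neighborSet x := by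
    have : w ∈ G.neighborSet x \ powerIter k G S 1 := by rw [hNx]; rfl
    exact this.1
  have haNx : a ∈ G.neighborSet x := hAax.symm
  have hNxsub : G.neighborSet x ⊆ insert a {y, w} := by
    intro u hu
    by_cases huO1 : u ∈ powerIter k G S 1
    · rw [hO1] at huO1
      rcases huO1 with h | h | h
      · exact Or.inl h
      · exact absurd (h ▸ hu : x ∈ G.neighborSet x) (G.irrefl)
      · exact Or.inr (Or.inl h)
    · have : u ∈ G.neighborSet x \ powerIter k G S 1 := ⟨hu, huO1⟩
      rw [hNx] at this
      exact Or.inr (Or.inr this)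
  have hwa_nadj : ¬ G.Adj a w := by
    intro h'
    have : w ∈ G.neighborSet a := h'
    rw [hNa] at this
    rcases this with h2 | h2
    · exact hw3.2.1 h2
    · exact hw3.2.2 h2
  rcases Nat.lt_or_ge (Fintype.card V) 5 with hn5 | hn5
  · -- n = 4
    have hO2univ : powerIter k G S 2 = Set.univ := by
      rw [← show pptOf k G S = 2 by omega]
      exact powerIter_pptOf hS.1
    have hcov : ∀ v : V, v = a ∨ v = x ∨ v = y ∨ v = w := by
      intro v
      have hv : v ∈ (insert w (insert a {x, y}) : Set V) := by
        rw [← hO1, ← hO2, hO2univ]; trivial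
      rcases hv with h | h | h | h <;> tauto
    by_cases hyNx : y ∈ G.neighborSet x
    · exfalso
      have hT1 : powerIter k G ({x} : Set V) 1 = insert x (G.neighborSet x) :=
        closedNbhd_singleton
      have hsub : powerIter k G S 2 ⊆ powerIter k G ({x} : Set V) 1 := by
        rw [hO2, hO1, hT1]
        intro v hv
        rcases hv with h | h | h | h <;> rw [h]
        · exact Set.mem_insert_of_mem _ hwNx
        · exact Set.mem_insert_of_mem _ haNx
        · exact Set.mem_insert _ _
        · exact Set.mem_insert_of_mem _ hyNx
      exact finisher hS (by rw [Set.ncard_singleton, hpd]) (by norm_num) (by norm_num)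
        hl2 hppt hsub
    · have hNxeq : G.neighborSet x = {a, w} := by
        apply subset_antisymm
        · intro u hu
          rcases hNxsub hu with h | h | h
          · exact Or.inl h
          · exact absurd (h ▸ hu) hyNx
          · exact Or.inr h
        · intro u hu
          rcases hu with h | h <;> rw [h]
          · exact haNx
          · exact hwNx
      have hxy_nadj : ¬ G.Adj x y := hyNx
      by_cases hyw : G.Adj y w
      · -- C4
        right
        have hAdj : ∀ u v : V, G.Adj u v ↔
            (u = a ∧ v = x) ∨ (u = x ∧ v = a) ∨ (u = x ∧ v = w) ∨ (u = w ∧ v = x) ∨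
            (u = w ∧ v = y) ∨ (u = y ∧ v = w) ∨ (u = y ∧ v = a) ∨ (u = a ∧ v = y) := by
          intro u v
          constructor
          · intro hadj
            rcases hcov u with h | h | h | h <;> rw [h] at hadj ⊢
            · have hv : v ∈ G.neighborSet a := hadj
              rw [hNa] at hv
              rcases hv with h2 | h2 <;> rw [h2] <;> tauto
            · have hv : v ∈ G.neighborSet x := hadj
              rw [hNxeq] at hv
              rcases hv with h2 | h2 <;> rw [h2] <;> tauto
            · rcases hcov v with h2 | h2 | h2 | h2 <;> rw [h2] at hadj ⊢
              · tauto
              · exact absurd hadj.symm hyNx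
              · exact absurd hadj (G.irrefl)
              · tauto
            · rcases hcov v with h2 | h2 | h2 | h2 <;> rw [h2] at hadj ⊢
              · exact absurd hadj.symm hwa_nadj
              · tauto
              · tauto
              · exact absurd hadj (G.irrefl)
          · rintro (⟨h1, h2⟩ | ⟨h1, h2⟩ | ⟨h1, h2⟩ | ⟨h1, h2⟩ | ⟨h1, h2⟩ |
              ⟨h1, h2⟩ | ⟨h1, h2⟩ | ⟨h1, h2⟩) <;> rw [h1, h2]
            · exact hAax
            · exact hAax.symm
            · exact hwNx
            · exact (hwNx : G.Adj x w).symm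
            · exact hyw.symm
            · exact hyw
            · exact hAay.symm
            · exact hAay
        refine iso_C4 a x w y hax hw3.1.symm hay (fun h => hw3.2.1 h.symm) hxy
          hw3.2.2 ?_ hAdj
        · intro v; rcases hcov v with h | h | h | h <;> tauto
      · -- P4
        left
        have hAdj : ∀ u v : V, G.Adj u v ↔
            (u = y ∧ v = a) ∨ (u = a ∧ v = y) ∨ (u = a ∧ v = x) ∨ (u = x ∧ v = a) ∨
            (u = x ∧ v = w) ∨ (u = w ∧ v = x) := by
          intro u v
          constructor
          · intro hadj
            rcases hcov u with h | h | h | h <;> rw [h] at hadj ⊢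
            · have hv : v ∈ G.neighborSet a := hadj
              rw [hNa] at hv
              rcases hv with h2 | h2 <;> rw [h2] <;> tauto
            · have hv : v ∈ G.neighborSet x := hadj
              rw [hNxeq] at hv
              rcases hv with h2 | h2 <;> rw [h2] <;> tauto
            · rcases hcov v with h2 | h2 | h2 | h2 <;> rw [h2] at hadj ⊢
              · tauto
              · exact absurd hadj.symm hyNx
              · exact absurd hadj (G.irrefl)
              · exact absurd hadj hyw
            · rcases hcov v with h2 | h2 | h2 | h2 <;> rw [h2] at hadj ⊢
              · exact absurd hadj.symm hwa_nadj
              · tauto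
              · exact absurd hadj.symm hyw
              · exact absurd hadj (G.irrefl)
          · rintro (⟨h1, h2⟩ | ⟨h1, h2⟩ | ⟨h1, h2⟩ | ⟨h1, h2⟩ | ⟨h1, h2⟩ |
              ⟨h1, h2⟩) <;> rw [h1, h2]
            · exact hAay.symm
            · exact hAay
            · exact hAax
            · exact hAax.symm
            · exact hwNx
            · exact (hwNx : G.Adj x w).symm
        refine iso_P4 y a x w hay.symm hxy.symm hw3.2.2.symm hax hw3.1.symm
          hw3.2.1.symm ?_ hAdj
        intro v; rcases hcov v with h | h | h | h <;> tauto
  · -- n ≥ 5 : contradiction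
    exfalso
    have hl3 : 3 ≤ pptOf k G S := by omega
    have hcardl : (powerIter k G S (pptOf k G S)).ncard = Fintype.card V := by
      rw [powerIter_pptOf hS.1, Set.ncard_univ, Nat.card_eq_fintype_card]
    have haxy : a ∉ ({x, y} : Set V) := by
      simp only [Set.mem_insert_iff, Set.mem_singleton_iff]
      tauto
    have hO1card : (powerIter k G S 1).ncard = 3 := by
      rw [hO1, Set.ncard_insert_of_notMem haxy (Set.toFinite _), Set.ncard_pair hxy]
    have hO2card : (powerIter k G S 2).ncard = 4 := by
      rw [hO2, Set.ncard_insert_of_notMem hwO1 (Set.toFinite _), hO1card]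
    have hup := chain_ncard hS.1 (t := 3) (s := pptOf k G S - 3) (by omega)
    rw [show 3 + (pptOf k G S - 3) = pptOf k G S by omega, hcardl] at hup
    have hlow : (powerIter k G S 2).ncard + 1 ≤ (powerIter k G S 3).ncard :=
      chain_ncard hS.1 (t := 2) (s := 1) (by omega)
    have hO3card : (powerIter k G S 3).ncard = 5 := by omega
    obtain ⟨z, hzO2, hO3⟩ := insert_of_ncard_succ (A := powerIter k G S 2)
      (B := powerIter k G S 3) (powerIter_subset_succ 2) (by omega) (Set.toFinite _)
    have hzmem : z ∈ powerIter k G S 3 := hO3 ▸ Set.mem_insert _ _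
    have hforced : ∃ v ∈ powerIter k G S 2, z ∈ G.neighborSet v \ powerIter k G S 2 ∧
        (G.neighborSet v \ powerIter k G S 2).ncard ≤ k := by
      have := (mem_propStep (k := k) (G := G) (S := powerIter k G S 2)).mp hzmem
      rcases this with h' | h'
      · exact absurd h' hzO2
      · exact h'
    obtain ⟨v, hvO2, hzNv, hkv⟩ := hforced
    have hNvz : G.neighborSet v \ powerIter k G S 2 = {z} := by
      apply subset_antisymm
      · intro u hu
        have humem : u ∈ powerIter k G S 3 := forced_subset_propStep hvO2 hkv hu
        rw [hO3] at humem
        rcases humem with h' | h'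
        · exact h'
        · exact absurd h' hu.2
      · intro u hu; rw [hu]; exact hzNv
    have hz4 : z ≠ w ∧ z ≠ a ∧ z ≠ x ∧ z ≠ y := by
      rw [hO2, hO1] at hzO2
      simp only [Set.mem_insert_iff, Set.mem_singleton_iff, not_or] at hzO2
      exact hzO2
    have hzNvmem : z ∈ G.neighborSet v := hzNv.1
    -- memberships of basic vertices in O2
    have hO2mem : ∀ u : V, (u = w ∨ u = a ∨ u = x ∨ u = y) → u ∈ powerIter k G S 2 := by
      intro u hu
      rw [hO2, hO1]
      rcases hu with h | h | h | h <;> rw [h] <;> simp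
    by_cases hyNx : y ∈ G.neighborSet x
    · -- {x} gets everything one step earlier
      have hT1 : powerIter k G ({x} : Set V) 1 = insert x (G.neighborSet x) :=
        closedNbhd_singleton
      have hsub : powerIter k G S 2 ⊆ powerIter k G ({x} : Set V) 1 := by
        rw [hO2, hO1, hT1]
        intro u hu
        rcases hu with h | h | h | h <;> rw [h]
        · exact Set.mem_insert_of_mem _ hwNx
        · exact Set.mem_insert_of_mem _ haNx
        · exact Set.mem_insert _ _
        · exact Set.mem_insert_of_mem _ hyNx
      exact finisher hS (by rw [Set.ncard_singleton, hpd]) (by norm_num) (by norm_num)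
        hl2 hppt hsub
    · have hNxeq : G.neighborSet x = {a, w} := by
        apply subset_antisymm
        · intro u hu
          rcases hNxsub hu with h | h | h
          · exact Or.inl h
          · exact absurd (h ▸ hu) hyNx
          · exact Or.inr h
        · intro u hu
          rcases hu with h | h <;> rw [h]
          · exact haNx
          · exact hwNx
      have hvcases : v = w ∨ v = y := by
        have hv' : v ∈ (insert w (insert a {x, y}) : Set V) := by rw [← hO1, ← hO2]; exact hvO2
        rcases hv' with h | h | h | h
        · exact Or.inl h
        · exfalso
          rw [h, hNa] at hzNvmem
          rcases hzNvmem with h2 | h2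
          · exact hz4.2.2.1 h2
          · exact hz4.2.2.2 h2
        · exfalso
          rw [h, hNxeq] at hzNvmem
          rcases hzNvmem with h2 | h2
          · exact hz4.2.1 h2
          · exact hz4.1 h2
        · exact Or.inr h
      rcases hvcases with hveq | hveq <;> rw [hveq] at hNvz hzNvmem
      · -- forcer is w
        have hNwz : G.neighborSet w \ powerIter k G S 2 = {z} := hNvz
        have hzNw : z ∈ G.neighborSet w := hzNvmem
        have hxNw : x ∈ G.neighborSet w := (hwNx : G.Adj x w).symm
        have haNw : a ∉ G.neighborSet w := fun h' => hwa_nadj (h' : G.Adj w a).symm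
        have hNwsub : G.neighborSet w ⊆ insert x {y, z} := by
          intro u hu
          by_cases huO2 : u ∈ powerIter k G S 2
          · rw [hO2, hO1] at huO2
            rcases huO2 with h' | h' | h' | h'
            · exact absurd (h' ▸ hu) (G.irrefl)
            · exact absurd (h' ▸ hu) haNw
            · exact Or.inl h'
            · exact Or.inr (Or.inl h')
          · have : u ∈ G.neighborSet w \ powerIter k G S 2 := ⟨hu, huO2⟩
            rw [hNwz] at this
            exact Or.inr (Or.inr this)
        have hT1x : powerIter k G ({x} : Set V) 1 = insert x (G.neighborSet x) :=
          closedNbhd_singleton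
        by_cases hkT : (G.neighborSet w \ powerIter k G ({x} : Set V) 1).ncard ≤ k
        · -- propagate from {x}
          have hwT1 : w ∈ powerIter k G ({x} : Set V) 1 := by
            rw [hT1x]; exact Set.mem_insert_of_mem _ hwNx
          have hyT1 : y ∉ powerIter k G ({x} : Set V) 1 := by
            rw [hT1x, hNxeq]
            simp only [Set.mem_insert_iff, Set.mem_singleton_iff, not_or]
            exact ⟨hxy.symm, hay.symm, hw3.2.2.symm⟩
          have hzT1 : z ∉ powerIter k G ({x} : Set V) 1 := by
            rw [hT1x, hNxeq]
            simp only [Set.mem_insert_iff, Set.mem_singleton_iff, not_or]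
            exact ⟨hz4.2.2.1, hz4.2.1, hz4.1⟩
          have hyforce : y ∈ powerIter k G ({x} : Set V) 2 := by
            rw [powerIter_two_eq 0]
            refine forced_subset_propStep (v := a)
              (by rw [hT1x]; exact Set.mem_insert_of_mem _ haNx) ?_ ⟨hAay, hyT1⟩
            have hsub1 : G.neighborSet a \ powerIter k G ({x} : Set V) 1 ⊆ {y} := by
              rintro u ⟨hu1, hu2⟩
              rw [hNa] at hu1
              rcases hu1 with h' | h'
              · exact absurd (by rw [hT1x, h']; exact Set.mem_insert _ _) hu2
              · exact h'
            calc (G.neighborSet a \ powerIter k G ({x} : Set V) 1).ncard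
                ≤ ({y} : Set V).ncard := Set.ncard_le_ncard hsub1 (Set.toFinite _)
              _ = 1 := Set.ncard_singleton y
              _ ≤ k := hk
          have hzforce : z ∈ powerIter k G ({x} : Set V) 2 := by
            rw [powerIter_two_eq 0]
            exact forced_subset_propStep (v := w) hwT1 hkT ⟨hzNw, hzT1⟩
          have hsub : powerIter k G S 3 ⊆ powerIter k G ({x} : Set V) 2 := by
            rw [hO3, hO2, hO1]
            intro u hu
            rcases hu with h' | h' | h' | h' | h' <;> rw [h']
            · exact hzforce
            · exact powerIter_subset_succ 1 hwT1
            · exact powerIter_subset_succ 1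
                (by rw [hT1x]; exact Set.mem_insert_of_mem _ haNx)
            · exact powerIter_subset_succ 1 (by rw [hT1x]; exact Set.mem_insert _ _)
            · exact hyforce
          exact finisher hS (by rw [Set.ncard_singleton, hpd]) (by norm_num) (by norm_num)
            hl3 hppt hsub
        · -- w is adjacent to both y and z; use {w}
          have hyNw : y ∈ G.neighborSet w := by
            by_contra hyNw
            have hsub1 : G.neighborSet w \ powerIter k G ({x} : Set V) 1 ⊆ {z} := by
              rintro u ⟨hu1, hu2⟩
              rcases hNwsub hu1 with h' | h' | h'
              · exact absurd (by rw [hT1x, h']; exact Set.mem_insert _ _) hu2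
              · exact absurd (h' ▸ hu1) hyNw
              · exact h'
            have : (G.neighborSet w \ powerIter k G ({x} : Set V) 1).ncard ≤ 1 := by
              calc (G.neighborSet w \ powerIter k G ({x} : Set V) 1).ncard
                  ≤ ({z} : Set V).ncard := Set.ncard_le_ncard hsub1 (Set.toFinite _)
                _ = 1 := Set.ncard_singleton z
            exact hkT (le_trans this hk)
          have hT1w : powerIter k G ({w} : Set V) 1 = insert w (G.neighborSet w) :=
            closedNbhd_singleton
          have haT1w : a ∉ powerIter k G ({w} : Set V) 1 := by
            rw [hT1w]
            simp only [Set.mem_insert_iff, not_or]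
            exact ⟨hw3.1.symm, haNw⟩
          have haforce : a ∈ powerIter k G ({w} : Set V) 2 := by
            rw [powerIter_two_eq 0]
            refine forced_subset_propStep (v := x)
              (by rw [hT1w]; exact Set.mem_insert_of_mem _ hxNw) ?_ ⟨haNx, haT1w⟩
            have hsub1 : G.neighborSet x \ powerIter k G ({w} : Set V) 1 ⊆ {a} := by
              rintro u ⟨hu1, hu2⟩
              rw [hNxeq] at hu1
              rcases hu1 with h' | h'
              · exact h'
              · exact absurd (by rw [hT1w, h']; exact Set.mem_insert _ _) hu2
            calc (G.neighborSet x \ powerIter k G ({w} : Set V) 1).ncard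
                ≤ ({a} : Set V).ncard := Set.ncard_le_ncard hsub1 (Set.toFinite _)
              _ = 1 := Set.ncard_singleton a
              _ ≤ k := hk
          have hsub : powerIter k G S 3 ⊆ powerIter k G ({w} : Set V) 2 := by
            rw [hO3, hO2, hO1]
            intro u hu
            rcases hu with h' | h' | h' | h' | h' <;> rw [h']
            · exact powerIter_subset_succ 1
                (by rw [hT1w]; exact Set.mem_insert_of_mem _ hzNw)
            · exact powerIter_subset_succ 1 (by rw [hT1w]; exact Set.mem_insert _ _)
            · exact haforce
            · exact powerIter_subset_succ 1
                (by rw [hT1w]; exact Set.mem_insert_of_mem _ hxNw)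
            · exact powerIter_subset_succ 1
                (by rw [hT1w]; exact Set.mem_insert_of_mem _ hyNw)
          exact finisher hS (by rw [Set.ncard_singleton, hpd]) (by norm_num) (by norm_num)
            hl3 hppt hsub
      · -- forcer is y
        have hNyz : G.neighborSet y \ powerIter k G S 2 = {z} := hNvz
        have hzNy : z ∈ G.neighborSet y := hzNvmem
        have hxNy : x ∉ G.neighborSet y := fun h' => hyNx (h' : G.Adj y x).symm
        have hzO1 : z ∉ powerIter k G S 1 := fun h' =>
          hzO2 (by rw [hO2]; exact Set.mem_insert_of_mem _ h')
        have hyforce2 : ¬ ((G.neighborSet y \ powerIter k G S 1).ncard ≤ k) := by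
          intro hle
          have hyO1 : y ∈ powerIter k G S 1 := by
            rw [hO1]; exact Or.inr (Or.inr rfl)
          have : z ∈ powerIter k G S 2 := by
            rw [powerIter_two_eq 0]
            exact forced_subset_propStep hyO1 hle ⟨hzNy, hzO1⟩
          exact hzO2 this
        have hwNy : w ∈ G.neighborSet y := by
          by_contra hwNy
          have hsub1 : G.neighborSet y \ powerIter k G S 1 ⊆ {z} := by
            rintro u ⟨hu1, hu2⟩
            by_cases huO2 : u ∈ powerIter k G S 2
            · rw [hO2] at huO2
              rcases huO2 with h' | h'
              · exact absurd (h' ▸ hu1) hwNy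
              · exact absurd h' hu2
            · have : u ∈ G.neighborSet y \ powerIter k G S 2 := ⟨hu1, huO2⟩
              rw [hNyz] at this
              exact this
          have : (G.neighborSet y \ powerIter k G S 1).ncard ≤ 1 := by
            calc (G.neighborSet y \ powerIter k G S 1).ncard
                ≤ ({z} : Set V).ncard := Set.ncard_le_ncard hsub1 (Set.toFinite _)
              _ = 1 := Set.ncard_singleton z
          exact hyforce2 (le_trans this hk)
        have hT1y : powerIter k G ({y} : Set V) 1 = insert y (G.neighborSet y) :=
          closedNbhd_singleton
        have haNy : a ∈ G.neighborSet y := hAay.symm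
        have hxT1y : x ∉ powerIter k G ({y} : Set V) 1 := by
          rw [hT1y]
          simp only [Set.mem_insert_iff, not_or]
          exact ⟨hxy, hxNy⟩
        have hxforce : x ∈ powerIter k G ({y} : Set V) 2 := by
          rw [powerIter_two_eq 0]
          refine forced_subset_propStep (v := a)
            (by rw [hT1y]; exact Set.mem_insert_of_mem _ haNy) ?_ ⟨hAax, hxT1y⟩
          have hsub1 : G.neighborSet a \ powerIter k G ({y} : Set V) 1 ⊆ {x} := by
            rintro u ⟨hu1, hu2⟩
            rw [hNa] at hu1
            rcases hu1 with h' | h'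
            · exact h'
            · exact absurd (by rw [hT1y, h']; exact Set.mem_insert _ _) hu2
          calc (G.neighborSet a \ powerIter k G ({y} : Set V) 1).ncard
              ≤ ({x} : Set V).ncard := Set.ncard_le_ncard hsub1 (Set.toFinite _)
            _ = 1 := Set.ncard_singleton x
            _ ≤ k := hk
        have hsub : powerIter k G S 3 ⊆ powerIter k G ({y} : Set V) 2 := by
          rw [hO3, hO2, hO1]
          intro u hu
          rcases hu with h' | h' | h' | h' | h' <;> rw [h']
          · exact powerIter_subset_succ 1
              (by rw [hT1y]; exact Set.mem_insert_of_mem _ hzNy)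
          · exact powerIter_subset_succ 1
              (by rw [hT1y]; exact Set.mem_insert_of_mem _ hwNy)
          · exact powerIter_subset_succ 1
              (by rw [hT1y]; exact Set.mem_insert_of_mem _ haNy)
          · exact hxforce
          · exact powerIter_subset_succ 1 (by rw [hT1y]; exact Set.mem_insert _ _)
        exact finisher hS (by rw [Set.ncard_singleton, hpd]) (by norm_num) (by norm_num)
          hl3 hppt hsub

lemma case_gamma_one (hk : 1 ≤ k) (hS : IsMinPDS k G S) (hS1 : S.ncard = 1)
    (hppt : ppt k G = pptOf k G S) (hl : pptOf k G S = Fintype.card V - 2)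
    (hn : 2 ≤ Fintype.card V) :
    Nonempty (G ≃g pathGraph 3) ∨ Nonempty (G ≃g pathGraph 4) ∨
    Nonempty (G ≃g cycleGraph 3) ∨ Nonempty (G ≃g cycleGraph 4) := by
  have hpd : pdNum k G = 1 := by rw [← hS.2, hS1]
  obtain ⟨a, hSa⟩ := Set.ncard_eq_one.mp hS1
  have hcardl : (powerIter k G S (pptOf k G S)).ncard = Fintype.card V := by
    rw [powerIter_pptOf hS.1, Set.ncard_univ, Nat.card_eq_fintype_card]
  have hn3 : 3 ≤ Fintype.card V := by
    by_contra hlt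
    have hl0 : pptOf k G S = 0 := by omega
    rw [hl0] at hcardl
    have : S.ncard = Fintype.card V := hcardl
    omega
  have hl1 : 1 ≤ pptOf k G S := by omega
  have hO1 : powerIter k G S 1 = insert a (G.neighborSet a) := by
    rw [hSa]
    exact closedNbhd_singleton
  have hup := chain_ncard hS.1 (t := 1) (s := pptOf k G S - 1) (by omega)
  rw [show 1 + (pptOf k G S - 1) = pptOf k G S by omega, hcardl] at hup
  have hlow : S.ncard + 1 ≤ (powerIter k G S 1).ncard :=
    chain_ncard hS.1 (t := 0) (s := 1) (by omega)
  have hO1cases : (powerIter k G S 1).ncard = 2 ∨ (powerIter k G S 1).ncard = 3 := by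
    omega
  rcases hO1cases with hO1card | hO1card
  · -- degree of a is 1 : contradiction
    exfalso
    have hl2 : 2 ≤ pptOf k G S := by
      rcases Nat.lt_or_ge (pptOf k G S) 2 with h' | h'
      · exfalso
        have hl1' : pptOf k G S = 1 := by omega
        rw [hl1'] at hcardl
        omega
      · exact h'
    obtain ⟨x, hxS, hO1x⟩ := insert_of_ncard_succ (A := S) (B := powerIter k G S 1)
      subset_closedNbhd (by omega) (Set.toFinite _)
    have hxa : x ≠ a := fun h' => hxS (by rw [hSa, h']; rfl)
    have hxNa : x ∈ G.neighborSet a := by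
      have hx1 : x ∈ powerIter k G S 1 := hO1x ▸ Set.mem_insert _ _
      rw [hO1] at hx1
      rcases hx1 with h' | h'
      · exact absurd h' hxa
      · exact h'
    have haNx : a ∈ G.neighborSet x := (hxNa : G.Adj a x).symm
    have hO1pair : powerIter k G S 1 = {x, a} := by rw [hO1x, hSa]
    have hNasub : G.neighborSet a ⊆ ({x, a} : Set V) := by
      intro u hu
      have : u ∈ powerIter k G S 1 := hO1 ▸ Set.mem_insert_of_mem _ hu
      rw [hO1pair] at this
      exact this
    have hsub : powerIter k G S 2 ⊆ powerIter k G ({x} : Set V) 1 := by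
      intro u hu
      have hu2 : u ∈ closedNbhd G (powerIter k G S 1) :=
        propStep_subset_closedNbhd (by rw [← powerIter_two_eq 0]; exact hu)
      rw [hO1pair, closedNbhd_pair] at hu2
      show u ∈ closedNbhd G {x}
      rw [closedNbhd_singleton]
      rcases hu2 with (h' | h') | h'
      · rcases h' with h' | h'
        · exact Or.inl h'
        · exact h' ▸ Or.inr haNx
      · exact Or.inr h'
      · rcases hNasub h' with h2 | h2
        · exact Or.inl h2
        · exact h2 ▸ Or.inr haNx
    exact finisher hS (by rw [Set.ncard_singleton, hpd]) (by norm_num) (by norm_num)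
      hl2 hppt hsub
  · -- degree of a is 2
    have haNa : a ∉ G.neighborSet a := fun h' => G.irrefl h'
    have hNa2 : (G.neighborSet a).ncard = 2 := by
      rw [hO1, Set.ncard_insert_of_notMem haNa (Set.toFinite _)] at hO1card
      omega
    obtain ⟨x, y, hxy, hNa⟩ := Set.ncard_eq_two.mp hNa2
    have hO1' : powerIter k G S 1 = insert a {x, y} := by rw [hO1, hNa]
    have hAax : G.Adj a x := by
      have : x ∈ G.neighborSet a := by rw [hNa]; exact Set.mem_insert _ _
      exact this
    have hAay : G.Adj a y := by
      have : y ∈ G.neighborSet a := by rw [hNa]; exact Set.mem_insert_of_mem _ rfl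
      exact this
    have hax : a ≠ x := hAax.ne
    have hay : a ≠ y := hAay.ne
    rcases Nat.lt_or_ge (pptOf k G S) 2 with hl2 | hl2
    · -- n = 3 : P3 or C3
      have hl1' : pptOf k G S = 1 := by omega
      have hO1univ : powerIter k G S 1 = Set.univ := by
        rw [← hl1']; exact powerIter_pptOf hS.1
      have hcov : ∀ v : V, v = a ∨ v = x ∨ v = y := by
        intro v
        have hv : v ∈ (insert a {x, y} : Set V) := by rw [← hO1', hO1univ]; trivial
        rcases hv with h' | h' | h' <;> tauto
      by_cases hxyadj : G.Adj x y
      · refine Or.inr (Or.inr (Or.inl (iso_C3 a x y hax hay hxy hcov ?_)))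
        intro u v
        constructor
        · exact fun hadj => hadj.ne
        · intro hne
          rcases hcov u with h' | h' | h' <;> rcases hcov v with h2 | h2 | h2 <;>
            rw [h', h2] at hne ⊢ <;>
            first
              | exact absurd rfl hne
              | exact hAax
              | exact hAax.symm
              | exact hAay
              | exact hAay.symm
              | exact hxyadj
              | exact hxyadj.symm
      · refine Or.inl (iso_P3 a x y hax hay hxy hcov ?_)
        intro u v
        constructor
        · intro hadj
          rcases hcov u with h' | h' | h' <;> rw [h'] at hadj ⊢
          · have hv : v ∈ G.neighborSet a := hadj
            rw [hNa] at hv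
            rcases hv with h2 | h2 <;> rw [h2] <;> tauto
          · rcases hcov v with h2 | h2 | h2 <;> rw [h2] at hadj ⊢
            · tauto
            · exact absurd hadj (G.irrefl)
            · exact absurd hadj hxyadj
          · rcases hcov v with h2 | h2 | h2 <;> rw [h2] at hadj ⊢
            · tauto
            · exact absurd hadj.symm hxyadj
            · exact absurd hadj (G.irrefl)
        · rintro (⟨h1, h2⟩ | ⟨h1, h2⟩ | ⟨h1, h2⟩ | ⟨h1, h2⟩) <;> rw [h1, h2]
          · exact hAax
          · exact hAax.symm
          · exact hAay
          · exact hAay.symm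
    · -- n ≥ 4
      have hn4 : 4 ≤ Fintype.card V := by omega
      have hup2 := chain_ncard hS.1 (t := 2) (s := pptOf k G S - 2) (by omega)
      rw [show 2 + (pptOf k G S - 2) = pptOf k G S by omega, hcardl] at hup2
      have hlow2 : (powerIter k G S 1).ncard + 1 ≤ (powerIter k G S 2).ncard :=
        chain_ncard hS.1 (t := 1) (s := 1) (by omega)
      have hO2card : (powerIter k G S 2).ncard = 4 := by omega
      obtain ⟨w, hwO1, hO2⟩ := insert_of_ncard_succ (A := powerIter k G S 1)
        (B := powerIter k G S 2) (powerIter_subset_succ 1) (by omega) (Set.toFinite _)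
      have hwmem : w ∈ powerIter k G S 2 := hO2 ▸ Set.mem_insert _ _
      have hforced : ∃ v ∈ powerIter k G S 1, w ∈ G.neighborSet v \ powerIter k G S 1 ∧
          (G.neighborSet v \ powerIter k G S 1).ncard ≤ k := by
        have := (mem_propStep (k := k) (G := G) (S := powerIter k G S 1)).mp hwmem
        rcases this with h' | h'
        · exact absurd h' hwO1
        · exact h'
      obtain ⟨v, hvO1, hwNv, hkv⟩ := hforced
      have hNvw : G.neighborSet v \ powerIter k G S 1 = {w} := by
        apply subset_antisymm
        · intro u hu
          have humem : u ∈ powerIter k G S 2 := forced_subset_propStep hvO1 hkv hu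
          rw [hO2] at humem
          rcases humem with h' | h'
          · exact h'
          · exact absurd h' hu.2
        · intro u hu; rw [hu]; exact hwNv
      have hvcases : v = x ∨ v = y := by
        have hv' : v ∈ (insert a {x, y} : Set V) := by rw [← hO1']; exact hvO1
        rcases hv' with h' | h' | h'
        · exfalso
          have := hwNv.1
          rw [h', hNa] at this
          rcases this with h2 | h2
          · exact hwNv.2 (by rw [hO1', h2]; exact Or.inr (Or.inl rfl))
          · exact hwNv.2 (by rw [hO1', h2]; exact Or.inr (Or.inr rfl))
        · exact Or.inl h'
        · exact Or.inr h'
      have hres : Nonempty (G ≃g pathGraph 4) ∨ Nonempty (G ≃g cycleGraph 4) := by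
        rcases hvcases with hveq | hveq <;> rw [hveq] at hNvw
        · exact gamma_one_aux hk hS hSa hxy hppt hl hn4 hNa hO1' hwO1 hO2 hNvw
        · refine gamma_one_aux (x := y) (y := x) hk hS hSa hxy.symm hppt hl hn4 ?_ ?_
            hwO1 hO2 hNvw
          · rw [hNa, Set.pair_comm]
          · rw [hO1', Set.pair_comm]
      rcases hres with h' | h'
      · exact Or.inr (Or.inl h')
      · exact Or.inr (Or.inr (Or.inr h'))

end Infra

open SimpleGraph PowerProp in
/-- If `ppt_k(G) = |G| - 2`, then `G` is one of
`K_1 ⊔ K_1, K_1 ⊔ K_2, P_3, P_4, C_3, C_4`. -/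
theorem ppt_eq_card_sub_two {V : Type*} [Fintype V]
    (k : ℕ) (hk : 1 ≤ k) (G : SimpleGraph V)
    (h : (ppt k G : ℤ) = (Fintype.card V : ℤ) - 2) :
    Nonempty (G ≃g completeGraph (Fin 1) ⊕g completeGraph (Fin 1)) ∨
    Nonempty (G ≃g completeGraph (Fin 1) ⊕g completeGraph (Fin 2)) ∨
    Nonempty (G ≃g pathGraph 3) ∨
    Nonempty (G ≃g pathGraph 4) ∨
    Nonempty (G ≃g cycleGraph 3) ∨
    Nonempty (G ≃g cycleGraph 4) := by
  classical
  have hn : 2 ≤ Fintype.card V := by omega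
  have hne : Nonempty V := Fintype.card_pos_iff.mp (by omega)
  obtain ⟨S, hS, hpptOf⟩ := exists_ppt (k := k) (G := G)
  have hppt : ppt k G = pptOf k G S := hpptOf.symm
  have hl : pptOf k G S = Fintype.card V - 2 := by omega
  have hSpos : 1 ≤ S.ncard := by
    rcases Nat.eq_zero_or_pos S.ncard with h0 | h1
    · exfalso
      have hSe : S = ∅ := (Set.ncard_eq_zero (Set.toFinite S)).mp h0
      exact not_isPDS_empty (k := k) (G := G) (hSe ▸ hS.1)
    · exact h1
  have hchain : (powerIter k G S 0).ncard + pptOf k G S ≤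
      (powerIter k G S (0 + pptOf k G S)).ncard := chain_ncard hS.1 (by omega)
  rw [Nat.zero_add, powerIter_pptOf hS.1, Set.ncard_univ, Nat.card_eq_fintype_card]
    at hchain
  have hS0 : (powerIter k G S 0).ncard = S.ncard := rfl
  have hcases : S.ncard = 1 ∨ S.ncard = 2 := by omega
  rcases hcases with h1 | h2
  · rcases case_gamma_one hk hS h1 hppt hl hn with h' | h' | h' | h'
    · exact Or.inr (Or.inr (Or.inl h'))
    · exact Or.inr (Or.inr (Or.inr (Or.inl h')))
    · exact Or.inr (Or.inr (Or.inr (Or.inr (Or.inl h'))))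
    · exact Or.inr (Or.inr (Or.inr (Or.inr (Or.inr h'))))
  · rcases case_gamma_two hk hS h2 hppt hl hn with h' | h'
    · exact Or.inl h'
    · exact Or.inr (Or.inl h')
end
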